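/- (Submodularity of mutual information under conditional independence) Let $X_1,\dots,X_m$ be finite random variables that are conditionally independent given $\hat{H}$. Then the set function $F(S) = I(X_S; \hat{H})$ on subsets $S \subseteq \{1,\dots,m\}$ is submodular: for all $S \subseteq T$ and $k \notin T$, $F(S \cup \{k\}) - F(S) \ge F(T \cup \{k\}) - F(T)$. -/

import Mathlib

open Finset Real

/-- Probability of an event under a pmf `p` on a finite sample space. -/
noncomputable def pr {O : Type*} [Fintype O] (p : O → ℝ) (E : O → Prop) [DecidablePred E] : ℝ :=
  ∑ w, if E w then p w else 0

/-- Pushforward pmf of a random variable `X`. -/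
noncomputable def pmfOf {O A : Type*} [Fintype O] [DecidableEq A] (p : O → ℝ) (X : O → A)
    (a : A) : ℝ :=
  ∑ w, if X w = a then p w else 0

/-- Shannon entropy (natural log) of a random variable `X` under pmf `p`. -/
noncomputable def Hent {O A : Type*} [Fintype O] [Fintype A] [DecidableEq A] (p : O → ℝ)
    (X : O → A) : ℝ :=
  ∑ a, Real.negMulLog (pmfOf p X a)

/-- Mutual information `I(X;Y) = H(X) + H(Y) - H(X,Y)`. -/
noncomputable def MI {O A B : Type*} [Fintype O] [Fintype A] [DecidableEq A] [Fintype B]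
    [DecidableEq B] (p : O → ℝ) (X : O → A) (Y : O → B) : ℝ :=
  Hent p X + Hent p Y - Hent p (fun w => (X w, Y w))

/-- Conditional entropy `H(X ∣ Y) = H(X,Y) - H(Y)`. -/
noncomputable def condEnt {O A B : Type*} [Fintype O] [Fintype A] [DecidableEq A] [Fintype B]
    [DecidableEq B] (p : O → ℝ) (X : O → A) (Y : O → B) : ℝ :=
  Hent p (fun w => (X w, Y w)) - Hent p Y

/-- Conditional independence of `X 0, …, X (m-1)` given `Hh`, expressed multiplicatively
to avoid division: `P(∀ i, X i = a i, Hh = b) * P(Hh = b)^(m-1) = ∏ i, P(X i = a i, Hh = b)`. -/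
def CondIndep {O A B : Type*} [Fintype O] [DecidableEq A] [DecidableEq B]
    (p : O → ℝ) (m : ℕ) (X : Fin m → O → A) (Hh : O → B) : Prop :=
  ∀ (a : Fin m → A) (b : B),
    pr p (fun w => (∀ i, X i w = a i) ∧ Hh w = b) * (pr p (fun w => Hh w = b)) ^ (m - 1)
      = ∏ i, pr p (fun w => X i w = a i ∧ Hh w = b)

/-- Mutual information between the subtuple of variables indexed by `S` and `Hh`. -/
noncomputable def MIsub {O A B : Type*} [Fintype O] [Fintype A] [DecidableEq A] [Fintype B]
    [DecidableEq B] (p : O → ℝ) {m : ℕ} (X : Fin m → O → A) (Hh : O → B)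
    (S : Finset (Fin m)) : ℝ :=
  MI p (fun w => fun i : {x // x ∈ S} => X i.1 w) Hh

/-! Write `h(K) = H(X_K)`. Since `I(X_K; Ĥ) = h(K) + H(Ĥ) - H(X_K, Ĥ)` and conditional
independence makes `H(X_{K ∪ {k}}, Ĥ) + H(Ĥ) = H(X_k, Ĥ) + H(X_K, Ĥ)` for `k ∉ K`, the marginal
gain `F(K ∪ {k}) - F(K)` equals `h(K ∪ {k}) - h(K) - H(X_k ∣ Ĥ)`. Its antitonicity in `K` is the
submodularity `h(K ∪ L) + h(K ∩ L) ≤ h(K) + h(L)` of entropy, i.e. the nonnegativity of the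
conditional mutual information `I(X_K; X_L ∣ X_{K ∩ L})`, which follows from Gibbs' inequality
applied on each slice of the conditioning variable. -/
section Probability

variable {O : Type*} [Fintype O] (p : O → ℝ)

theorem pr_congr {E F : O → Prop} [DecidablePred E] [DecidablePred F] (h : ∀ w, E w ↔ F w) :
    pr p E = pr p F :=
  sum_congr rfl fun w _ => if_congr (h w) rfl rfl

theorem pr_nonneg (hp : ∀ w, 0 ≤ p w) (E : O → Prop) [DecidablePred E] : 0 ≤ pr p E :=
  sum_nonneg fun w _ => by split_ifs <;> simp [hp w]

theorem pr_mono (hp : ∀ w, 0 ≤ p w) {E F : O → Prop} [DecidablePred E] [DecidablePred F]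
    (h : ∀ w, E w → F w) : pr p E ≤ pr p F :=
  sum_le_sum fun w _ => by
    by_cases hE : E w
    · simp [hE, h w hE]
    · simp only [hE, if_false]; split_ifs <;> simp [hp w]

theorem pr_pos (hp : ∀ w, 0 ≤ p w) {E : O → Prop} [DecidablePred E] {w : O} (hw : 0 < p w)
    (hE : E w) : 0 < pr p E :=
  hw.trans_le <| by
    simpa [pr, hE] using single_le_sum (f := fun w => if E w then p w else 0)
      (fun w _ => by split_ifs <;> simp [hp w]) (mem_univ w)

theorem sum_pr_and {C : Type*} [DecidableEq C] (Y : O → C) (t : Finset C) (E : O → Prop)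
    [DecidablePred E] :
    ∑ c ∈ t, pr p (fun w => Y w = c ∧ E w) = pr p (fun w => Y w ∈ t ∧ E w) := by
  unfold pr
  rw [sum_comm]
  refine sum_congr rfl fun w _ => ?_
  by_cases hE : E w <;> simp [hE]

end Probability

section Entropy

variable {O C D : Type*} [Fintype O] [Fintype C] [DecidableEq C] [Fintype D] [DecidableEq D]
  (p : O → ℝ)

theorem Hent_eq_neg_sum_mul_log (Y : O → C) :
    Hent p Y = -∑ w, p w * log (pmfOf p Y (Y w)) := by
  rw [Hent, ← sum_fiberwise univ Y (fun w => p w * log (pmfOf p Y (Y w))), ← sum_neg_distrib]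
  refine sum_congr rfl fun c _ => ?_
  rw [sum_congr rfl fun w hw => by rw [(mem_filter.1 hw).2], ← sum_mul, sum_filter]
  exact neg_mul _ _

theorem Hent_congr {Y : O → C} {Y' : O → D} (h : ∀ w w', Y w' = Y w ↔ Y' w' = Y' w) :
    Hent p Y = Hent p Y' := by
  have hpmf : ∀ w, pmfOf p Y (Y w) = pmfOf p Y' (Y' w) := fun w => pr_congr p (h w)
  simp only [Hent_eq_neg_sum_mul_log, hpmf]

end Entropy

section Gibbs

variable {U V : Type*} [Fintype U] [Fintype V]

-- Gibbs' inequality `x * log (x / q) ≥ x - q`, with `q = a * b / c`.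
theorem sub_mul_div_le_mul_log {x a b c : ℝ} (hx : 0 ≤ x) (ha : x ≤ a) (hb : x ≤ b)
    (hc : x ≤ c) : x - a * b / c ≤ x * (log x + log c - log a - log b) := by
  rcases hx.eq_or_lt with rfl | hx
  · simp only [zero_sub, zero_mul, neg_nonpos]
    exact div_nonneg (mul_nonneg ha hb) hc
  have ha' := hx.trans_le ha
  have hb' := hx.trans_le hb
  have hc' := hx.trans_le hc
  have h := one_sub_inv_le_log_of_pos (by positivity : 0 < x * c / (a * b))
  rw [log_div (by positivity) (by positivity), log_mul hx.ne' hc'.ne',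
    log_mul ha'.ne' hb'.ne', inv_div] at h
  have h' := mul_le_mul_of_nonneg_left h hx.le
  have hq : x * (1 - a * b / (x * c)) = x - a * b / c := by field_simp
  linarith

theorem sum_negMulLog_marginals_sub (s : U → V → ℝ) :
    (∑ u, negMulLog (∑ v, s u v) + ∑ v, negMulLog (∑ u, s u v))
        - (∑ u, ∑ v, negMulLog (s u v) + negMulLog (∑ u, ∑ v, s u v))
      = ∑ u, ∑ v, s u v * (log (s u v) + log (∑ u, ∑ v, s u v)
          - log (∑ v, s u v) - log (∑ u, s u v)) := by
  have hjoint : ∑ u, ∑ v, negMulLog (s u v) = -∑ u, ∑ v, s u v * log (s u v) := by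
    simp [negMulLog]
  have htotal :
      negMulLog (∑ u, ∑ v, s u v) = -∑ u, ∑ v, s u v * log (∑ u, ∑ v, s u v) := by
    simp [negMulLog, sum_mul]
  have hrow : ∑ u, negMulLog (∑ v, s u v) = -∑ u, ∑ v, s u v * log (∑ v, s u v) := by
    simp [negMulLog, sum_mul]
  have hcol : ∑ v, negMulLog (∑ u, s u v) = -∑ u, ∑ v, s u v * log (∑ u, s u v) := by
    rw [sum_comm]
    simp [negMulLog, sum_mul]
  rw [hjoint, htotal, hrow, hcol]
  simp only [mul_add, mul_sub, sum_add_distrib, sum_sub_distrib]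
  ring

theorem sum_sum_negMulLog_add_negMulLog_le (s : U → V → ℝ) (hs : ∀ u v, 0 ≤ s u v) :
    ∑ u, ∑ v, negMulLog (s u v) + negMulLog (∑ u, ∑ v, s u v)
      ≤ ∑ u, negMulLog (∑ v, s u v) + ∑ v, negMulLog (∑ u, s u v) := by
  rw [← sub_nonneg, sum_negMulLog_marginals_sub]
  have hzero :
      ∑ u, ∑ v, (s u v - (∑ v, s u v) * (∑ u, s u v) / ∑ u, ∑ v, s u v) = 0 := by
    simp only [sum_sub_distrib, ← sum_div, ← mul_sum, ← sum_mul]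
    rw [sum_comm (f := fun u v => s u v) (s := univ) (t := univ), mul_self_div_self, sub_self]
  rw [← hzero]
  exact sum_le_sum fun u _ => sum_le_sum fun v _ => sub_mul_div_le_mul_log (hs u v)
    (single_le_sum (fun v _ => hs u v) (mem_univ v))
    (single_le_sum (fun u _ => hs u v) (mem_univ u))
    ((single_le_sum (fun v _ => hs u v) (mem_univ v)).trans
      (single_le_sum (fun u _ => sum_nonneg fun v _ => hs u v) (mem_univ u)))

end Gibbs

section EntropyInequalities

variable {O α β γ : Type*} [Fintype O] [DecidableEq α] [DecidableEq β] [DecidableEq γ]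
  (p : O → ℝ)

theorem sum_pmfOf_prod_right [Fintype β] (X : O → α) (Y : O → β) (x : α) :
    ∑ y, pmfOf p (fun w => (X w, Y w)) (x, y) = pmfOf p X x := by
  unfold pmfOf
  rw [sum_comm]
  refine sum_congr rfl fun w _ => ?_
  by_cases hx : X w = x <;> simp [hx]

theorem sum_pmfOf_prod_left [Fintype α] (X : O → α) (Y : O → β) (y : β) :
    ∑ x, pmfOf p (fun w => (X w, Y w)) (x, y) = pmfOf p Y y := by
  unfold pmfOf
  rw [sum_comm]
  refine sum_congr rfl fun w _ => ?_
  by_cases hy : Y w = y <;> simp [hy]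

theorem sum_pmfOf [Fintype α] (X : O → α) : ∑ x, pmfOf p X x = ∑ w, p w := by
  unfold pmfOf
  rw [sum_comm]
  simp

theorem Hent_prod_add_negMulLog_le [Fintype α] [Fintype β] (hp : ∀ w, 0 ≤ p w) (X : O → α)
    (Y : O → β) :
    Hent p (fun w => (X w, Y w)) + negMulLog (∑ w, p w) ≤ Hent p X + Hent p Y := by
  have h := sum_sum_negMulLog_add_negMulLog_le (fun x y => pmfOf p (fun w => (X w, Y w)) (x, y))
    fun _ _ => pr_nonneg p hp _
  simp only [sum_pmfOf_prod_right, sum_pmfOf_prod_left, sum_pmfOf] at h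
  rwa [Hent, Hent, Hent, Fintype.sum_prod_type]

theorem pmfOf_prod_eq_pmfOf_restrict (Y : O → α) (Z : O → β) (y : α) (z : β) :
    pmfOf p (fun w => (Y w, Z w)) (y, z) = pmfOf (fun w => if Z w = z then p w else 0) Y y :=
  sum_congr rfl fun w _ => by simp [Prod.ext_iff, ite_and]

-- Conditioning on `Z = z` is restricting the (unnormalised) weights to the slice `Z = z`.
theorem Hent_prod_eq_sum_Hent_restrict [Fintype α] [Fintype β] (Y : O → α) (Z : O → β) :
    Hent p (fun w => (Y w, Z w)) = ∑ z, Hent (fun w => if Z w = z then p w else 0) Y := by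
  rw [Hent, Fintype.sum_prod_type, sum_comm]
  simp only [pmfOf_prod_eq_pmfOf_restrict, Hent]

theorem Hent_prod_prod_add_le [Fintype α] [Fintype β] [Fintype γ] (hp : ∀ w, 0 ≤ p w)
    (X : O → α) (Y : O → β) (Z : O → γ) :
    Hent p (fun w => ((X w, Y w), Z w)) + Hent p Z
      ≤ Hent p (fun w => (X w, Z w)) + Hent p (fun w => (Y w, Z w)) := by
  have hZ : Hent p Z = ∑ z, negMulLog (∑ w, if Z w = z then p w else 0) := rfl
  rw [Hent_prod_eq_sum_Hent_restrict p (fun w => (X w, Y w)) Z,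
    Hent_prod_eq_sum_Hent_restrict p X Z, Hent_prod_eq_sum_Hent_restrict p Y Z, hZ,
    ← sum_add_distrib, ← sum_add_distrib]
  exact sum_le_sum fun z _ => Hent_prod_add_negMulLog_le _
    (fun w => by split_ifs <;> simp [hp w]) X Y

def CondIndepPair (X : O → α) (Y : O → β) (Z : O → γ) : Prop :=
  ∀ x y z, pr p (fun w => X w = x ∧ Y w = y ∧ Z w = z) * pr p (fun w => Z w = z)
    = pr p (fun w => X w = x ∧ Z w = z) * pr p (fun w => Y w = y ∧ Z w = z)

theorem Hent_prod_prod_add_eq_of_condIndepPair [Fintype α] [Fintype β] [Fintype γ]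
    (hp : ∀ w, 0 ≤ p w) {X : O → α} {Y : O → β} {Z : O → γ}
    (h : CondIndepPair p X Y Z) :
    Hent p (fun w => ((X w, Y w), Z w)) + Hent p Z
      = Hent p (fun w => (X w, Z w)) + Hent p (fun w => (Y w, Z w)) := by
  have key : ∀ w,
      p w * log (pmfOf p (fun w => ((X w, Y w), Z w)) ((X w, Y w), Z w))
        + p w * log (pmfOf p Z (Z w))
      = p w * log (pmfOf p (fun w => (X w, Z w)) (X w, Z w))
        + p w * log (pmfOf p (fun w => (Y w, Z w)) (Y w, Z w)) := by
    intro w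
    rcases (hp w).eq_or_lt with hw | hw
    · simp [← hw]
    have hxyz : pmfOf p (fun w => ((X w, Y w), Z w)) ((X w, Y w), Z w)
        = pr p (fun w' => X w' = X w ∧ Y w' = Y w ∧ Z w' = Z w) :=
      pr_congr p fun w' => by simp [Prod.ext_iff, and_assoc]
    have hxz : pmfOf p (fun w => (X w, Z w)) (X w, Z w)
        = pr p (fun w' => X w' = X w ∧ Z w' = Z w) :=
      pr_congr p fun w' => by simp [Prod.ext_iff]
    have hyz : pmfOf p (fun w => (Y w, Z w)) (Y w, Z w)
        = pr p (fun w' => Y w' = Y w ∧ Z w' = Z w) :=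
      pr_congr p fun w' => by simp [Prod.ext_iff]
    have hz : pmfOf p Z (Z w) = pr p (fun w' => Z w' = Z w) := rfl
    rw [hxyz, hxz, hyz, hz, ← mul_add, ← mul_add, ← log_mul, ← log_mul, h]
    all_goals exact (pr_pos p hp hw (by simp)).ne'
  have hsum := sum_congr rfl fun w (_ : w ∈ univ) => key w
  simp only [sum_add_distrib] at hsum
  simp only [Hent_eq_neg_sum_mul_log]
  linarith

end EntropyInequalities

section Subfamilies

variable {O A B : Type*} {m : ℕ}

def tupleOn (X : Fin m → O → A) (K : Finset (Fin m)) : O → K → A :=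
  fun w i => X i w

theorem tupleOn_eq_iff (X : Fin m → O → A) (K : Finset (Fin m)) (w w' : O) :
    tupleOn X K w' = tupleOn X K w ↔ ∀ i ∈ K, X i w' = X i w := by
  simp [tupleOn, funext_iff]

theorem MIsub_eq [Fintype O] [Fintype A] [DecidableEq A] [Fintype B] [DecidableEq B]
    (p : O → ℝ) (X : Fin m → O → A) (Hh : O → B) (K : Finset (Fin m)) :
    MIsub p X Hh K
      = Hent p (tupleOn X K) + Hent p Hh - Hent p (fun w => (tupleOn X K w, Hh w)) :=
  rfl

theorem Hent_tupleOn_union_add_inter_le [Fintype O] [Fintype A] [DecidableEq A] (p : O → ℝ)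
    (hp : ∀ w, 0 ≤ p w) (X : Fin m → O → A) (K L : Finset (Fin m)) :
    Hent p (tupleOn X (K ∪ L)) + Hent p (tupleOn X (K ∩ L))
      ≤ Hent p (tupleOn X K) + Hent p (tupleOn X L) := by
  calc Hent p (tupleOn X (K ∪ L)) + Hent p (tupleOn X (K ∩ L))
      = Hent p (fun w => ((tupleOn X K w, tupleOn X L w), tupleOn X (K ∩ L) w))
        + Hent p (tupleOn X (K ∩ L)) := by
        congr 1
        refine Hent_congr p fun w w' => ?_
        simp only [Prod.ext_iff, tupleOn_eq_iff, mem_union, mem_inter]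
        grind
    _ ≤ Hent p (fun w => (tupleOn X K w, tupleOn X (K ∩ L) w))
        + Hent p (fun w => (tupleOn X L w, tupleOn X (K ∩ L) w)) :=
      Hent_prod_prod_add_le p hp _ _ _
    _ = Hent p (tupleOn X K) + Hent p (tupleOn X L) := by
      congr 1 <;> refine Hent_congr p fun w w' => ?_ <;>
        simp only [Prod.ext_iff, tupleOn_eq_iff, mem_inter] <;> grind

end Subfamilies

theorem prod_ite_mem_insert_mul {ι M : Type*} [Fintype ι] [DecidableEq ι] [CommMonoid M]
    {K : Finset ι} {k : ι} (hk : k ∉ K) (r : ι → M) (c : M) :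
    (∏ i, if i ∈ insert k K then r i else c) * c = r k * ∏ i, if i ∈ K then r i else c := by
  have hrest : ∏ i ∈ {k}ᶜ, (if i ∈ insert k K then r i else c)
      = ∏ i ∈ {k}ᶜ, if i ∈ K then r i else c :=
    prod_congr rfl fun i hi => by simp only [mem_insert, (by simpa using hi : i ≠ k), false_or]
  rw [Fintype.prod_eq_mul_prod_compl k, Fintype.prod_eq_mul_prod_compl k, hrest,
    if_pos (mem_insert_self k K), if_neg hk, mul_comm c, mul_assoc]

namespace CondIndep

variable {O A B : Type*} [Fintype O] [DecidableEq A] [DecidableEq B] {p : O → ℝ} {m : ℕ}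
  {X : Fin m → O → A} {Hh : O → B}

theorem pr_forall_mem_mul_pow [Fintype A] (hci : CondIndep p m X Hh) (t : Fin m → Finset A)
    (b : B) :
    pr p (fun w => (∀ i, X i w ∈ t i) ∧ Hh w = b) * pr p (fun w => Hh w = b) ^ (m - 1)
      = ∏ i, pr p (fun w => X i w ∈ t i ∧ Hh w = b) := by
  have hlhs : pr p (fun w => (∀ i, X i w ∈ t i) ∧ Hh w = b)
      = ∑ a ∈ Fintype.piFinset t, pr p (fun w => (fun i => X i w) = a ∧ Hh w = b) := by
    rw [sum_pr_and]
    exact pr_congr p fun w => by simp [Fintype.mem_piFinset]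
  have hrhs : ∏ i, pr p (fun w => X i w ∈ t i ∧ Hh w = b)
      = ∏ i, ∑ x ∈ t i, pr p (fun w => X i w = x ∧ Hh w = b) :=
    prod_congr rfl fun i _ => (sum_pr_and p (X i) (t i) _).symm
  rw [hlhs, hrhs, prod_univ_sum, sum_mul]
  refine sum_congr rfl fun a _ => ?_
  rw [← hci a b]
  congr 1
  exact pr_congr p fun w => by simp [funext_iff]

theorem pr_forall_mem_and_mul_pow [Fintype A] (hci : CondIndep p m X Hh) (K : Finset (Fin m))
    (a : Fin m → A) (b : B) :
    pr p (fun w => (∀ i ∈ K, X i w = a i) ∧ Hh w = b) * pr p (fun w => Hh w = b) ^ (m - 1)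
      = ∏ i, if i ∈ K then pr p (fun w => X i w = a i ∧ Hh w = b)
          else pr p (fun w => Hh w = b) := by
  convert hci.pr_forall_mem_mul_pow (fun i => if i ∈ K then {a i} else univ) b using 2
  · refine pr_congr p fun w => and_congr_left' (forall_congr' fun i => ?_)
    split_ifs with hi <;> simp [hi]
  · split_ifs <;> exact pr_congr p fun w => by simp

theorem pr_and_forall_mem_mul [Fintype A] (hp : ∀ w, 0 ≤ p w) (hci : CondIndep p m X Hh)
    {K : Finset (Fin m)} {k : Fin m} (hk : k ∉ K) (a : Fin m → A) (b : B) :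
    pr p (fun w => X k w = a k ∧ (∀ i ∈ K, X i w = a i) ∧ Hh w = b)
        * pr p (fun w => Hh w = b)
      = pr p (fun w => X k w = a k ∧ Hh w = b)
        * pr p (fun w => (∀ i ∈ K, X i w = a i) ∧ Hh w = b) := by
  set c := pr p (fun w => Hh w = b)
  rcases (pr_nonneg p hp _ : 0 ≤ c).eq_or_lt with hc | hc
  · have hk0 : pr p (fun w => X k w = a k ∧ Hh w = b) = 0 :=
      le_antisymm (hc ▸ pr_mono p hp fun w h => h.2) (pr_nonneg p hp _)
    rw [show c = 0 from hc.symm, hk0, mul_zero, zero_mul]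
  have hevent : pr p (fun w => X k w = a k ∧ (∀ i ∈ K, X i w = a i) ∧ Hh w = b)
      = pr p (fun w => (∀ i ∈ insert k K, X i w = a i) ∧ Hh w = b) :=
    pr_congr p fun w => by rw [forall_mem_insert, and_assoc]
  refine mul_right_cancel₀ (pow_ne_zero (m - 1) hc.ne') ?_
  calc _ = pr p (fun w => (∀ i ∈ insert k K, X i w = a i) ∧ Hh w = b) * c ^ (m - 1) * c := by
        rw [hevent]
        ring
    _ = pr p (fun w => X k w = a k ∧ Hh w = b)
          * ∏ i, if i ∈ K then pr p (fun w => X i w = a i ∧ Hh w = b) else c := by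
        rw [hci.pr_forall_mem_and_mul_pow, prod_ite_mem_insert_mul hk]
    _ = _ := by
        rw [← hci.pr_forall_mem_and_mul_pow]
        ring

theorem condIndepPair_tupleOn [Fintype A] (hp : ∀ w, 0 ≤ p w) (hci : CondIndep p m X Hh)
    {K : Finset (Fin m)} {k : Fin m} (hk : k ∉ K) :
    CondIndepPair p (X k) (tupleOn X K) Hh := by
  intro x y b
  let a : Fin m → A := fun i => if h : i ∈ K then y ⟨i, h⟩ else x
  have hak : a k = x := dif_neg hk
  have hy : ∀ w, tupleOn X K w = y ↔ ∀ i ∈ K, X i w = a i := fun w => by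
    simp only [tupleOn, funext_iff, Subtype.forall]
    exact forall₂_congr fun i hi => by rw [show a i = y ⟨i, hi⟩ from dif_pos hi]
  have h := hci.pr_and_forall_mem_mul hp hk a b
  rw [hak] at h
  convert h using 2 <;> exact pr_congr p fun w => by simp only [hy]

theorem Hent_tupleOn_insert_add [Fintype A] [Fintype B] (hp : ∀ w, 0 ≤ p w)
    (hci : CondIndep p m X Hh) {K : Finset (Fin m)} {k : Fin m} (hk : k ∉ K) :
    Hent p (fun w => (tupleOn X (insert k K) w, Hh w)) + Hent p Hh
      = Hent p (fun w => (X k w, Hh w)) + Hent p (fun w => (tupleOn X K w, Hh w)) := by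
  rw [← Hent_prod_prod_add_eq_of_condIndepPair p hp (hci.condIndepPair_tupleOn hp hk)]
  congr 1
  exact Hent_congr p fun w w' => by simp [Prod.ext_iff, tupleOn_eq_iff, and_assoc]

end CondIndep

theorem mutual_information_submodular_of_condIndep_general
    {O A B : Type*} [Fintype O] [Fintype A] [DecidableEq A] [Fintype B] [DecidableEq B]
    (p : O → ℝ) (hp : ∀ w, 0 ≤ p w)
    (m : ℕ) (X : Fin m → O → A) (Hh : O → B)
    (hci : CondIndep p m X Hh)
    (S T : Finset (Fin m)) (hST : S ⊆ T) (k : Fin m) (hk : k ∉ T) :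
    MIsub p X Hh (insert k T) - MIsub p X Hh T
      ≤ MIsub p X Hh (insert k S) - MIsub p X Hh S := by
  have hkS : k ∉ S := fun h => hk (hST h)
  have hunion : insert k S ∪ T = insert k T := by
    rw [insert_union, union_eq_right.2 hST]
  have hinter : insert k S ∩ T = S := by
    rw [insert_inter_of_notMem hk, inter_eq_left.2 hST]
  have hsub := Hent_tupleOn_union_add_inter_le p hp X (insert k S) T
  rw [hunion, hinter] at hsub
  have hcondS := hci.Hent_tupleOn_insert_add hp hkS
  have hcondT := hci.Hent_tupleOn_insert_add hp hk
  simp only [MIsub_eq]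
  linarith

theorem mutual_information_submodular_of_condIndep
    {O A B : Type*} [Fintype O] [Fintype A] [DecidableEq A] [Fintype B] [DecidableEq B]
    (p : O → ℝ) (hp : ∀ w, 0 ≤ p w) (hp1 : ∑ w, p w = 1)
    (m : ℕ) (X : Fin m → O → A) (Hh : O → B)
    (hci : CondIndep p m X Hh)
    (S T : Finset (Fin m)) (hST : S ⊆ T) (k : Fin m) (hk : k ∉ T) :
    MIsub p X Hh (insert k T) - MIsub p X Hh T
      ≤ MIsub p X Hh (insert k S) - MIsub p X Hh S :=
  mutual_information_submodular_of_condIndep_general p hp m X Hh hci S T hST k hk
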